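/- Let ψ : [0,1] → [0,1] be a convex increasing function with ψ(0) = 0 and ψ(1) = 1, let C ≥ e^{1/e}, and let x = (x_1,...,x_n) be a stochastic vector with maximal coordinate y = max_i x_i > 0. Then ∑_{j=1}^n ψ(x_j / (C·∏_{k=1}^n (1-x_k)^{1-x_k})) ≤ (1/y)·ψ(y·e^{1-y} / (C·(1-y)^{1-y})). -/

import Mathlib

/-!
Write `P = ∏ₖ (1 - xₖ)^(1 - xₖ)` and `a = y / (C P)`. Since `xⱼ / y ∈ [0, 1]`, convexity and
`ψ 0 = 0` give `ψ (xⱼ / (C P)) = ψ ((xⱼ / y) a) ≤ (xⱼ / y) ψ a`, and summing over `j` gives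
`ψ a / y`. It remains to replace `a` by the larger `y e^{1-y} / (C (1-y)^{1-y})` using
monotonicity: the bound `s^s ≥ e^{s-1}` applied to every factor `k ≠ i` of `P`, where
`xᵢ = y`, gives `P ≥ e^{-(1-y)} (1-y)^{1-y}`. The new argument is still at most `1` because
`y e^{1-y} ≤ 1` and `s^s ≥ e^{-1/e}`, which is where `C ≥ e^{1/e}` enters.
-/

open Real Finset

theorem ConvexOn.map_smul_le_smul_of_map_zero {𝕜 E β : Type*} [Ring 𝕜] [PartialOrder 𝕜]
    [IsOrderedRing 𝕜] [AddCommMonoid E] [SMulZeroClass 𝕜 E] [AddCommMonoid β] [PartialOrder β]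
    [SMulZeroClass 𝕜 β] {s : Set E} {f : E → β} (hf : ConvexOn 𝕜 s f) (h₀ : (0 : E) ∈ s)
    (hf₀ : f 0 = 0) {x : E} (hx : x ∈ s) {t : 𝕜} (ht₀ : 0 ≤ t) (ht₁ : t ≤ 1) :
    f (t • x) ≤ t • f x := by
  simpa [hf₀] using hf.2 hx h₀ ht₀ (sub_nonneg.2 ht₁) (add_sub_cancel t 1)

namespace Real

theorem exp_sub_one_le_rpow_self {s : ℝ} (hs : 0 ≤ s) : exp (s - 1) ≤ s ^ s := by
  rcases hs.eq_or_lt with rfl | hs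
  · simp
  · rw [rpow_def_of_pos hs, mul_comm]
    exact exp_le_exp.2 (self_sub_one_le_mul_log hs.le)

theorem rpow_self_pos {s : ℝ} (hs : 0 ≤ s) : 0 < s ^ s :=
  (exp_pos _).trans_le (exp_sub_one_le_rpow_self hs)

theorem neg_one_div_exp_one_le_mul_log {s : ℝ} (hs : 0 ≤ s) : -(1 / exp 1) ≤ s * log s := by
  rcases hs.eq_or_lt with rfl | hs
  · simp [(exp_pos 1).le]
  -- `log u ≤ u - 1` at `u = 1 / (e s)`
  have h := log_le_sub_one_of_pos (x := 1 / (exp 1 * s)) (by positivity)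
  rw [log_div one_ne_zero (by positivity), log_mul (exp_pos 1).ne' hs.ne', log_exp,
    log_one] at h
  have : s * (1 / (exp 1 * s)) = 1 / exp 1 := by field_simp
  nlinarith

theorem exp_neg_one_div_exp_one_le_rpow_self {s : ℝ} (hs : 0 ≤ s) :
    exp (-(1 / exp 1)) ≤ s ^ s := by
  rcases hs.eq_or_lt with rfl | hs
  · simp [(exp_pos 1).le]
  · rw [rpow_def_of_pos hs, mul_comm]
    exact exp_le_exp.2 (neg_one_div_exp_one_le_mul_log hs.le)

theorem mul_exp_one_sub_le_one (y : ℝ) : y * exp (1 - y) ≤ 1 := by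
  calc y * exp (1 - y) ≤ exp (y - 1) * exp (1 - y) := by
        gcongr
        linarith [add_one_le_exp (y - 1)]
    _ = 1 := by rw [← exp_add]; simp

theorem exp_neg_sum_le_prod_rpow_self {ι : Type*} (s : Finset ι) {x : ι → ℝ}
    (hx : ∀ k ∈ s, x k ≤ 1) : exp (-∑ k ∈ s, x k) ≤ ∏ k ∈ s, (1 - x k) ^ (1 - x k) := by
  rw [← sum_neg_distrib, exp_sum]
  refine prod_le_prod (fun k _ ↦ (exp_pos _).le) fun k hk ↦ ?_
  simpa using exp_sub_one_le_rpow_self (sub_nonneg.2 (hx k hk))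

theorem exp_neg_one_sub_mul_rpow_le_prod_rpow_self {ι : Type*} [Fintype ι] {x : ι → ℝ}
    (hx : ∀ k, x k ≤ 1) (hsum : ∑ k, x k = 1) (i : ι) :
    exp (-(1 - x i)) * (1 - x i) ^ (1 - x i) ≤ ∏ k, (1 - x k) ^ (1 - x k) := by
  classical
  have hrest : ∑ k ∈ univ.erase i, x k = 1 - x i := by
    rw [← hsum, ← add_sum_erase univ x (mem_univ i), add_sub_cancel_left]
  calc exp (-(1 - x i)) * (1 - x i) ^ (1 - x i)
      ≤ (∏ k ∈ univ.erase i, (1 - x k) ^ (1 - x k)) * (1 - x i) ^ (1 - x i) := by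
        gcongr
        · exact (rpow_self_pos (sub_nonneg.2 (hx i))).le
        · exact hrest ▸ exp_neg_sum_le_prod_rpow_self _ fun k _ ↦ hx k
    _ = ∏ k, (1 - x k) ^ (1 - x k) := by
        rw [mul_comm]
        exact mul_prod_erase univ (fun k ↦ (1 - x k) ^ (1 - x k)) (mem_univ i)

end Real

theorem ConvexOn.sum_map_div_mul_le {ι : Type*} (s : Finset ι) {ψ : ℝ → ℝ}
    (hψ : ConvexOn ℝ (Set.Icc 0 1) ψ) (hψ₀ : ψ 0 = 0) {x : ι → ℝ} {y a : ℝ}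
    (hx : ∀ i ∈ s, 0 ≤ x i) (hxy : ∀ i ∈ s, x i ≤ y) (hy : 0 < y) (ha : a ∈ Set.Icc 0 1) :
    ∑ i ∈ s, ψ (x i / y * a) ≤ (∑ i ∈ s, x i) / y * ψ a := by
  rw [sum_div, sum_mul]
  exact sum_le_sum fun i hi ↦ hψ.map_smul_le_smul_of_map_zero ⟨le_rfl, zero_le_one⟩ hψ₀ ha
    (div_nonneg (hx i hi) hy.le) ((div_le_one hy).2 (hxy i hi))

theorem stmt_16_general (ψ : ℝ → ℝ)
    (hconv : ConvexOn ℝ (Set.Icc 0 1) ψ)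
    (hmono : MonotoneOn ψ (Set.Icc 0 1))
    (h0 : ψ 0 = 0)
    (C : ℝ) (hC : C ≥ Real.exp (1 / Real.exp 1))
    {n : ℕ} (x : Fin n → ℝ) (hx : ∀ i, 0 ≤ x i) (hsum : ∑ i, x i = 1)
    (y : ℝ) (hy : 0 < y) (hmax : ∀ i, x i ≤ y) (hatt : ∃ i, x i = y) :
    ∑ j, ψ (x j / (C * ∏ k, (1 - x k) ^ (1 - x k))) ≤
      (1 / y) * ψ (y * Real.exp (1 - y) / (C * (1 - y) ^ (1 - y))) := by
  obtain ⟨i, hi⟩ := hatt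
  have hy1 : y ≤ 1 := hi ▸ hsum ▸ single_le_sum (fun j _ ↦ hx j) (mem_univ i)
  have hC₀ : 0 < C := (exp_pos _).trans_le hC
  have hs₀ : 0 < (1 - y) ^ (1 - y) := rpow_self_pos (by linarith)
  set P := ∏ k, (1 - x k) ^ (1 - x k)
  have hP := hi ▸ exp_neg_one_sub_mul_rpow_le_prod_rpow_self (fun k ↦ (hmax k).trans hy1) hsum i
  have hP₀ : 0 < P := (mul_pos (exp_pos _) hs₀).trans_le hP
  set z := y * exp (1 - y) / (C * (1 - y) ^ (1 - y)) with hz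
  have haz : y / (C * P) ≤ z := by
    calc y / (C * P) ≤ y / (C * (exp (-(1 - y)) * (1 - y) ^ (1 - y))) := by gcongr
      _ = z := by rw [hz, exp_neg]; field_simp
  have hz1 : z ≤ 1 := (div_le_one (by positivity)).2 <| calc
    y * exp (1 - y) ≤ exp (1 / exp 1) * exp (-(1 / exp 1)) := by
      rw [← exp_add, add_neg_cancel, exp_zero]; exact mul_exp_one_sub_le_one y
    _ ≤ C * (1 - y) ^ (1 - y) := by
      gcongr; exact exp_neg_one_div_exp_one_le_rpow_self (by linarith)
  have ha : y / (C * P) ∈ Set.Icc 0 1 := ⟨by positivity, haz.trans hz1⟩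
  calc ∑ j, ψ (x j / (C * P)) = ∑ j, ψ (x j / y * (y / (C * P))) := by
        congr! 2 with j; field_simp
    _ ≤ (∑ j, x j) / y * ψ (y / (C * P)) :=
        hconv.sum_map_div_mul_le _ h0 (fun j _ ↦ hx j) (fun j _ ↦ hmax j) hy ha
    _ ≤ 1 / y * ψ z := by
        rw [hsum]
        gcongr
        exact hmono ha ⟨by positivity, hz1⟩ haz

theorem stmt_16 (ψ : ℝ → ℝ)
    (hconv : ConvexOn ℝ (Set.Icc 0 1) ψ)
    (hmono : MonotoneOn ψ (Set.Icc 0 1))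
    (h0 : ψ 0 = 0) (h1 : ψ 1 = 1)
    (C : ℝ) (hC : C ≥ Real.exp (1 / Real.exp 1))
    {n : ℕ} (x : Fin n → ℝ) (hx : ∀ i, 0 ≤ x i) (hsum : ∑ i, x i = 1)
    (y : ℝ) (hy : 0 < y) (hmax : ∀ i, x i ≤ y) (hatt : ∃ i, x i = y) :
    ∑ j, ψ (x j / (C * ∏ k, (1 - x k) ^ (1 - x k))) ≤
      (1 / y) * ψ (y * Real.exp (1 - y) / (C * (1 - y) ^ (1 - y))) :=
  stmt_16_general ψ hconv hmono h0 C hC x hx hsum y hy hmax hatt
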